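/- For every ε ∈ [0,1): every rate R > H(X|Y) is ε-achievable for lossless source coding with side information, and no rate R < H(X|Y) is ε-achievable. -/

import Mathlib

open Filter

noncomputable section

/-- `p` is a probability mass function on the finite alphabet `α`. -/
def IsPMF {α : Type*} [Fintype α] (p : α → ℝ) : Prop :=
  (∀ a, 0 ≤ p a) ∧ ∑ a, p a = 1

open Classical in
/-- Probability that the random variable `X` takes the value `a`, under the pmf `p`. -/
def probEq {Ω α : Type*} [Fintype Ω] (p : Ω → ℝ) (X : Ω → α) (a : α) : ℝ :=
  ∑ ω, if X ω = a then p ω else 0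

/-- Shannon entropy (base 2) of the random variable `X` under the pmf `p`. -/
def entOf {Ω α : Type*} [Fintype Ω] (p : Ω → ℝ) (X : Ω → α) : ℝ :=
  -∑ ω, p ω * Real.logb 2 (probEq p X (X ω))

/-- Conditional Shannon entropy `H(X | Y)` under the pmf `p`. -/
def condEntOf {Ω α β : Type*} [Fintype Ω] (p : Ω → ℝ) (X : Ω → α) (Y : Ω → β) : ℝ :=
  entOf p (fun ω => (X ω, Y ω)) - entOf p Y

/-- Mutual information `I(X ; Y)` under the pmf `p`. -/
def miOf {Ω α β : Type*} [Fintype Ω] (p : Ω → ℝ) (X : Ω → α) (Y : Ω → β) : ℝ :=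
  entOf p X + entOf p Y - entOf p (fun ω => (X ω, Y ω))

/-- Conditional mutual information `I(X ; Y | Z)` under the pmf `p`. -/
def condMIOf {Ω α β γ : Type*} [Fintype Ω] (p : Ω → ℝ) (X : Ω → α) (Y : Ω → β)
    (Z : Ω → γ) : ℝ :=
  condEntOf p X Z + condEntOf p Y Z - condEntOf p (fun ω => (X ω, Y ω)) Z

open Classical in
/-- Probability of the set `S` under the pmf `p`. -/
def probSet {Ω : Type*} [Fintype Ω] (p : Ω → ℝ) (S : Set Ω) : ℝ :=
  ∑ ω, if ω ∈ S then p ω else 0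

open Classical in
/-- Number of occurrences of the symbol `a` in the sequence `w`. -/
def Ncount {W : Type*} {n : ℕ} (w : Fin n → W) (a : W) : ℕ :=
  (Finset.univ.filter (fun i => w i = a)).card

/-- The strongly typical set `T_μ⁽ⁿ⁾(P)`: sequences whose empirical frequencies differ
from `P` by at most `μ` in every entry and that contain no symbol of zero probability. -/
def typicalSet {W : Type*} [Fintype W] (P : W → ℝ) (μ : ℝ) (n : ℕ) : Set (Fin n → W) :=
  {w | ∀ a, |((Ncount w a : ℝ)) / n - P a| ≤ μ ∧ (P a = 0 → Ncount w a = 0)}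

/-- The typicality parameter `μ_n = n^{-1/3}`. -/
def μseq (n : ℕ) : ℝ := (n : ℝ) ^ (-(1/3 : ℝ))

/-- The i.i.d. pmf on sequences of length `n`. -/
def iidSeq {W : Type*} [Fintype W] (P : W → ℝ) (n : ℕ) (w : Fin n → W) : ℝ :=
  ∏ i, P (w i)

/-- The i.i.d. pmf on pairs of sequences of length `n`. -/
def iidPair {X Y : Type*} [Fintype X] [Fintype Y] (P : X × Y → ℝ) (n : ℕ)
    (xy : (Fin n → X) × (Fin n → Y)) : ℝ :=
  ∏ i, P (xy.1 i, xy.2 i)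

/-- A pair of sequences viewed as one sequence over the product alphabet. -/
def pairSeq {X Y : Type*} {n : ℕ} (xy : (Fin n → X) × (Fin n → Y)) : Fin n → X × Y :=
  fun i => (xy.1 i, xy.2 i)

open Classical in
/-- Rate `R` is `ε`-achievable for lossless source coding of `X` with side information `Y`
at the decoder: there exist sequences (in the blocklength `n`) of encoders into messages
of `nR` bits (i.e. at most `2^{nR}` messages) and of decoders such that the probability
of a reconstruction error has `limsup` at most `ε`. -/
def slAchievable {X Y : Type*} [Fintype X] [Fintype Y] (P : X × Y → ℝ) (R ε : ℝ) : Prop :=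
  0 < R ∧
  ∃ (M : ℕ → ℕ) (φ : ∀ n : ℕ, (Fin n → X) → Fin (M n))
    (g : ∀ n : ℕ, Fin (M n) → (Fin n → Y) → (Fin n → X)),
    (∀ n, (M n : ℝ) ≤ 2 ^ ((n : ℝ) * R)) ∧
    limsup (fun n => ∑ xy : (Fin n → X) × (Fin n → Y),
        if g n (φ n xy.1) xy.2 ≠ xy.1 then iidPair P n xy else 0) atTop ≤ ε

/-- The conditional entropy `H(X|Y)` computed from the joint pmf `P_{XY}`. -/
def condEntBase {X Y : Type*} [Fintype X] [Fintype Y] (P : X × Y → ℝ) : ℝ :=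
  condEntOf P Prod.fst Prod.snd

/-!
Both directions rest on the conditional information density `ι(x, y) = -log₂ P(x | y)`, whose
mean is `H(X|Y)`: by Chebyshev's inequality `∑ᵢ ι(xᵢ, yᵢ)` lies within `nδ` of `n H(X|Y)`
outside a set of vanishing probability, and there `P(xⁿ | yⁿ)` is within a factor `2^{±nδ}` of
`2^{-n H(X|Y)}`.

Achievability is random binning: hash `xⁿ` into `⌊2^{nR}⌋` bins and decode to a sequence of the
bin that is likely given `yⁿ`. At most `2^{n(H+δ)}` sequences are likely, so averaged over all
hash functions a wrong one shares the bin with probability at most `2^{n(H+δ) - nR} → 0`, and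
some hash function does at least as well as the average.

For the strong converse, given `yⁿ` a code with `M` messages decodes correctly at most `M`
sequences `xⁿ`, each of conditional probability at most `2^{-n(H-δ)}` unless atypical, so the
probability of correct decoding is at most `P(atypical) + M 2^{-n(H-δ)} → 0` when `R < H`.
-/

section ProbSet

variable {Ω : Type*} [Fintype Ω] {p : Ω → ℝ}

lemma probSet_setOf (p : Ω → ℝ) (Q : Ω → Prop) [DecidablePred Q] :
    probSet p {ω | Q ω} = ∑ ω, if Q ω then p ω else 0 := by
  unfold probSet; congr!

lemma probSet_nonneg (hp : ∀ ω, 0 ≤ p ω) (S : Set Ω) : 0 ≤ probSet p S := by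
  classical
  exact Finset.sum_nonneg fun ω _ => by split_ifs <;> simp [hp ω]

lemma probSet_le_of_pos_imp (hp : ∀ ω, 0 ≤ p ω) {S T : Set Ω}
    (h : ∀ ω ∈ S, 0 < p ω → ω ∈ T) : probSet p S ≤ probSet p T := by
  classical
  refine Finset.sum_le_sum fun ω _ => ?_
  by_cases hS : ω ∈ S
  · rcases (hp ω).eq_or_lt with h0 | hpos
    · simp [← h0]
    · simp [hS, h ω hS hpos]
  · simp only [hS, if_false]; split_ifs <;> simp [hp ω]

lemma probSet_mono (hp : ∀ ω, 0 ≤ p ω) {S T : Set Ω} (h : S ⊆ T) :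
    probSet p S ≤ probSet p T :=
  probSet_le_of_pos_imp hp fun _ hω _ => h hω

lemma probSet_union_le (hp : ∀ ω, 0 ≤ p ω) (S T : Set Ω) :
    probSet p (S ∪ T) ≤ probSet p S + probSet p T := by
  classical
  rw [probSet, probSet, probSet, ← Finset.sum_add_distrib]
  refine Finset.sum_le_sum fun ω _ => ?_
  by_cases hS : ω ∈ S <;> by_cases hT : ω ∈ T <;> simp [hS, hT, hp ω]

lemma probSet_add_probSet_compl (hp : IsPMF p) (S : Set Ω) :
    probSet p S + probSet p Sᶜ = 1 := by
  classical
  rw [probSet, probSet, ← Finset.sum_add_distrib, ← hp.2]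
  refine Finset.sum_congr rfl fun ω _ => ?_
  by_cases hS : ω ∈ S <;> simp [hS]

lemma probSet_le_one (hp : IsPMF p) (S : Set Ω) : probSet p S ≤ 1 := by
  linarith [probSet_add_probSet_compl hp S, probSet_nonneg hp.1 Sᶜ]

lemma IsPMF.nonempty (hp : IsPMF p) : Nonempty Ω := by
  by_contra h
  have := hp.2
  simp [not_nonempty_iff.1 h] at this

lemma probSet_comp_equiv {Ω' : Type*} [Fintype Ω'] (e : Ω' ≃ Ω) (p : Ω → ℝ) (S : Set Ω) :
    probSet (p ∘ e) (e ⁻¹' S) = probSet p S := by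
  classical
  exact Fintype.sum_equiv e _ _ fun _ => by simp

lemma probSet_le_sum_mul (hp : ∀ ω, 0 ≤ p ω) {S : Set Ω} {f : Ω → ℝ} (hf : ∀ ω, 0 ≤ f ω)
    (hS : ∀ ω ∈ S, 1 ≤ f ω) : probSet p S ≤ ∑ ω, p ω * f ω := by
  classical
  refine Finset.sum_le_sum fun ω _ => ?_
  split_ifs with h
  · exact le_mul_of_one_le_right (hp ω) (hS ω h)
  · exact mul_nonneg (hp ω) (hf ω)

/-- Chebyshev's inequality. -/
lemma probSet_lt_abs_le (hp : ∀ ω, 0 ≤ p ω) (f : Ω → ℝ) {t : ℝ} (ht : 0 < t) :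
    probSet p {ω | t < |f ω|} ≤ (∑ ω, p ω * f ω ^ 2) / t ^ 2 := by
  classical
  rw [probSet_setOf, Finset.sum_div]
  refine Finset.sum_le_sum fun ω _ => ?_
  split_ifs with h
  · have : t ^ 2 ≤ f ω ^ 2 := by
      rw [← sq_abs (f ω)]; exact pow_le_pow_left₀ ht.le h.le 2
    rw [le_div_iff₀ (by positivity)]
    exact mul_le_mul_of_nonneg_left this (hp ω)
  · have := hp ω; positivity

end ProbSet

section Iid

variable {Ω : Type*} [Fintype Ω] {p : Ω → ℝ} {n : ℕ}

lemma isPMF_iidSeq (hp : IsPMF p) (n : ℕ) : IsPMF (iidSeq p n) := by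
  classical
  refine ⟨fun z => Finset.prod_nonneg fun i _ => hp.1 (z i), ?_⟩
  simp only [iidSeq, ← Fintype.prod_sum (fun _ : Fin n => p), hp.2, Finset.prod_const_one]

lemma sum_iidSeq_mul_apply_mul_apply (hp : IsPMF p) {f : Ω → ℝ} (hf : ∑ ω, p ω * f ω = 0)
    (i j : Fin n) :
    ∑ z, iidSeq p n z * (f (z i) * f (z j)) = if i = j then ∑ ω, p ω * f ω ^ 2 else 0 := by
  classical
  set h : Fin n → Ω → ℝ := fun k ω => p ω * (if k = i then f ω else 1) * (if k = j then f ω else 1)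
  -- the summand is a product of functions of one coordinate each
  have factor : ∀ z : Fin n → Ω, iidSeq p n z * (f (z i) * f (z j)) = ∏ k, h k (z k) := by
    intro z
    simp only [h, Finset.prod_mul_distrib, Finset.prod_ite_eq', Finset.mem_univ, if_true,
      iidSeq, mul_assoc]
  rw [Finset.sum_congr rfl fun z _ => factor z, ← Fintype.prod_sum]
  split_ifs with hij
  · subst hij
    rw [Finset.prod_eq_single i (fun k _ hk => by simp [h, hk, hp.2]) (by simp)]
    simp [h, sq, mul_assoc]
  · exact Finset.prod_eq_zero (Finset.mem_univ i) (by simpa [h, hij] using hf)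

lemma sum_iidSeq_mul_sum_sq (hp : IsPMF p) {f : Ω → ℝ} (hf : ∑ ω, p ω * f ω = 0) :
    ∑ z, iidSeq p n z * (∑ i, f (z i)) ^ 2 = n * ∑ ω, p ω * f ω ^ 2 := by
  have expand : ∀ z : Fin n → Ω, iidSeq p n z * (∑ i, f (z i)) ^ 2
      = ∑ i, ∑ j, iidSeq p n z * (f (z i) * f (z j)) := by
    intro z
    simp_rw [sq, Finset.sum_mul_sum, Finset.mul_sum]
  calc _ = ∑ i, ∑ j, ∑ z, iidSeq p n z * (f (z i) * f (z j)) := by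
        simp_rw [expand]
        rw [Finset.sum_comm]
        exact Finset.sum_congr rfl fun _ _ => Finset.sum_comm
    _ = _ := by simp [sum_iidSeq_mul_apply_mul_apply hp hf]

lemma probSet_iidSeq_lt_abs_sum_le (hp : IsPMF p) {f : Ω → ℝ} (hf : ∑ ω, p ω * f ω = 0)
    {t : ℝ} (ht : 0 < t) :
    probSet (iidSeq p n) {z | t < |∑ i, f (z i)|} ≤ n * (∑ ω, p ω * f ω ^ 2) / t ^ 2 := by
  rw [← sum_iidSeq_mul_sum_sq hp hf]
  exact probSet_lt_abs_le (isPMF_iidSeq hp n).1 _ ht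

end Iid

section Binning

lemma card_filter_apply_eq_apply_mul {α β : Type*} [Fintype α] [Fintype β] [DecidableEq α]
    [DecidableEq β] {a b : α} (hab : a ≠ b) :
    (Finset.univ.filter fun φ : α → β => φ a = φ b).card * Fintype.card β
      = Fintype.card β ^ Fintype.card α := by
  let E : {φ : α → β // φ a = φ b} ≃ ({c : α // c ≠ b} → β) :=
    { toFun := fun φ c => φ.1 c
      invFun := fun ψ => ⟨fun c => if h : c = b then ψ ⟨a, hab⟩ else ψ ⟨c, h⟩, by simp [hab]⟩
      left_inv := fun φ => by
        ext c
        by_cases h : c = b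
        · subst h; simp [φ.2]
        · simp [h]
      right_inv := fun ψ => by ext c; simp [c.2] }
  rw [← Fintype.card_subtype, ← Fintype.card_prod, Fintype.card_congr (E.prodCongr (Equiv.refl β)),
    ← Fintype.card_fun]
  exact Fintype.card_congr ((Equiv.prodComm _ _).trans (Equiv.piSplitAt b fun _ => β).symm)

variable {α β : Type*} [DecidableEq α] {m : ℕ}

def listDecoder [Nonempty α] (L : β → Finset α) (φ : α → Fin m) (k : Fin m) (y : β) : α :=
  if h : ∃ x ∈ L y, φ x = k then h.choose else Classical.arbitrary α

def binCollisions (L : β → Finset α) (φ : α → Fin m) (ω : α × β) : Finset α :=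
  ((L ω.2).erase ω.1).filter fun x' => φ x' = φ ω.1

lemma listDecoder_eq [Nonempty α] {L : β → Finset α} {φ : α → Fin m} {ω : α × β}
    (hω : ω.1 ∈ L ω.2) (hcoll : binCollisions L φ ω = ∅) :
    listDecoder L φ (φ ω.1) ω.2 = ω.1 := by
  have h : ∃ x ∈ L ω.2, φ x = φ ω.1 := ⟨ω.1, hω, rfl⟩
  rw [listDecoder, dif_pos h]
  obtain ⟨hmem, hbin⟩ := h.choose_spec
  by_contra hne
  have : h.choose ∈ binCollisions L φ ω :=
    Finset.mem_filter.2 ⟨Finset.mem_erase.2 ⟨hne, hmem⟩, hbin⟩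
  simp [hcoll] at this

variable [Fintype α]

lemma sum_card_binCollisions_mul (L : β → Finset α) (ω : α × β) :
    (∑ φ : α → Fin m, (binCollisions L φ ω).card) * m
      = ((L ω.2).erase ω.1).card * m ^ Fintype.card α := by
  simp only [binCollisions, Finset.card_filter]
  rw [Finset.sum_comm, Finset.sum_mul, Finset.card_eq_sum_ones, Finset.sum_mul]
  refine Finset.sum_congr rfl fun x' hx' => ?_
  rw [← Finset.card_filter, one_mul]
  simpa using card_filter_apply_eq_apply_mul (β := Fin m) (Finset.ne_of_mem_erase hx')

variable [Fintype β]

variable {p : α × β → ℝ}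

lemma probSet_listDecoder_ne_le [Nonempty α] (hp : ∀ ω, 0 ≤ p ω) (L : β → Finset α)
    (φ : α → Fin m) :
    probSet p {ω | listDecoder L φ (φ ω.1) ω.2 ≠ ω.1}
      ≤ probSet p {ω | ω.1 ∉ L ω.2} + ∑ ω, p ω * (binCollisions L φ ω).card := by
  calc _ ≤ probSet p ({ω | ω.1 ∉ L ω.2} ∪ {ω | 1 ≤ ((binCollisions L φ ω).card : ℝ)}) := by
        refine probSet_mono hp fun ω hω => ?_
        by_contra hnot
        simp only [Set.mem_union, Set.mem_ofPred_eq, not_or, not_not, Nat.one_le_cast,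
          Finset.one_le_card, Finset.not_nonempty_iff_eq_empty] at hnot
        exact hω (listDecoder_eq hnot.1 hnot.2)
    _ ≤ _ := (probSet_union_le hp _ _).trans <| add_le_add le_rfl <|
        probSet_le_sum_mul hp (fun _ => by positivity) fun _ h => h

lemma sum_sum_mul_card_binCollisions_le (hp : IsPMF p) {L : β → Finset α} {K : ℝ}
    (hL : ∀ y, ((L y).card : ℝ) ≤ K) (hm : 0 < m) :
    ∑ φ : α → Fin m, ∑ ω, p ω * (binCollisions L φ ω).card
      ≤ (m : ℝ) ^ Fintype.card α * (K / m) := by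
  have per_pair : ∀ ω : α × β, (∑ φ : α → Fin m, ((binCollisions L φ ω).card : ℝ))
      ≤ (m : ℝ) ^ Fintype.card α * (K / m) := by
    intro ω
    rw [← mul_div_assoc, le_div_iff₀ (by exact_mod_cast hm)]
    have hcard : (((L ω.2).erase ω.1).card : ℝ) ≤ K :=
      (Nat.cast_le.2 (Finset.card_le_card (Finset.erase_subset _ _))).trans (hL ω.2)
    calc (∑ φ : α → Fin m, ((binCollisions L φ ω).card : ℝ)) * m
        = ((L ω.2).erase ω.1).card * (m : ℝ) ^ Fintype.card α := by
          exact_mod_cast sum_card_binCollisions_mul L ω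
      _ ≤ K * (m : ℝ) ^ Fintype.card α := by gcongr
      _ = _ := mul_comm _ _
  calc _ = ∑ ω, p ω * ∑ φ : α → Fin m, ((binCollisions L φ ω).card : ℝ) := by
        rw [Finset.sum_comm]
        simp only [Finset.mul_sum]
    _ ≤ ∑ ω, p ω * ((m : ℝ) ^ Fintype.card α * (K / m)) :=
        Finset.sum_le_sum fun ω _ => mul_le_mul_of_nonneg_left (per_pair ω) (hp.1 ω)
    _ = _ := by rw [← Finset.sum_mul, hp.2, one_mul]

lemma exists_binning_error_le [Nonempty α] (hp : IsPMF p) (L : β → Finset α)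
    {K : ℝ} (hL : ∀ y, ((L y).card : ℝ) ≤ K) (hm : 0 < m) :
    ∃ (φ : α → Fin m) (g : Fin m → β → α),
      probSet p {ω | g (φ ω.1) ω.2 ≠ ω.1} ≤ probSet p {ω | ω.1 ∉ L ω.2} + K / m := by
  have : NeZero m := ⟨hm.ne'⟩
  have total : ∑ φ : α → Fin m, probSet p {ω | listDecoder L φ (φ ω.1) ω.2 ≠ ω.1}
      ≤ ∑ _φ : α → Fin m, (probSet p {ω | ω.1 ∉ L ω.2} + K / m) :=
    calc _ ≤ ∑ φ : α → Fin m,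
          (probSet p {ω | ω.1 ∉ L ω.2} + ∑ ω, p ω * (binCollisions L φ ω).card) :=
          Finset.sum_le_sum fun φ _ => probSet_listDecoder_ne_le hp.1 L φ
      _ ≤ _ := by
          rw [Finset.sum_add_distrib, Finset.sum_add_distrib, Finset.sum_const (K / m),
            Finset.card_univ, Fintype.card_fun, Fintype.card_fin, nsmul_eq_mul, Nat.cast_pow]
          exact add_le_add le_rfl (sum_sum_mul_card_binCollisions_le hp hL hm)
  obtain ⟨φ, -, hφ⟩ := Finset.exists_le_of_sum_le Finset.univ_nonempty total
  exact ⟨φ, listDecoder L φ, hφ⟩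

end Binning

section Marginal

variable {α β : Type*} [Fintype α] {p : α × β → ℝ}

def sndMarginal (p : α × β → ℝ) (b : β) : ℝ := ∑ a, p (a, b)

lemma sndMarginal_nonneg (hp : ∀ ω, 0 ≤ p ω) (b : β) : 0 ≤ sndMarginal p b :=
  Finset.sum_nonneg fun _ _ => hp _

lemma le_sndMarginal (hp : ∀ ω, 0 ≤ p ω) (ω : α × β) : p ω ≤ sndMarginal p ω.2 :=
  Finset.single_le_sum (f := fun a => p (a, ω.2)) (fun _ _ => hp _) (Finset.mem_univ ω.1)

lemma card_filter_decode_eq_le {M : ℕ} (φ : α → Fin M) (g : Fin M → β → α) (b : β)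
    [DecidablePred fun a => g (φ a) b = a] :
    (Finset.univ.filter fun a => g (φ a) b = a).card ≤ M := by
  have hinj : Set.InjOn φ (Finset.univ.filter fun a => g (φ a) b = a) := by
    intro a ha a' ha' h
    simp only [Finset.coe_filter, Finset.mem_univ, true_and, Set.mem_ofPred_eq] at ha ha'
    rw [← ha, ← ha', h]
  simpa using Finset.card_le_card_of_injOn φ (fun _ _ => Finset.mem_univ _) hinj

lemma card_filter_le_inv (hp : ∀ ω, 0 ≤ p ω) {c : ℝ} (hc : 0 < c) (b : β) :
    ((Finset.univ.filter fun a => 0 < p (a, b) ∧ sndMarginal p b * c ≤ p (a, b)).card : ℝ)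
      ≤ c⁻¹ := by
  set s := Finset.univ.filter fun a => 0 < p (a, b) ∧ sndMarginal p b * c ≤ p (a, b)
  rcases s.eq_empty_or_nonempty with hs | ⟨a, ha⟩
  · simp [hs, hc.le]
  have hq : 0 < sndMarginal p b :=
    (Finset.mem_filter.1 ha).2.1.trans_le (le_sndMarginal hp (a, b))
  have : s.card * (sndMarginal p b * c) ≤ sndMarginal p b :=
    calc s.card * (sndMarginal p b * c) = ∑ _a ∈ s, sndMarginal p b * c := by
          rw [Finset.sum_const, nsmul_eq_mul]
      _ ≤ ∑ a ∈ s, p (a, b) := Finset.sum_le_sum fun a ha => (Finset.mem_filter.1 ha).2.2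
      _ ≤ sndMarginal p b :=
          Finset.sum_le_sum_of_subset_of_nonneg (Finset.subset_univ _) fun _ _ _ => hp _
  rw [← one_div, le_div_iff₀ hc]
  exact le_of_mul_le_mul_left (by linarith) hq

variable [Fintype β]

lemma sum_sndMarginal (p : α × β → ℝ) : ∑ b, sndMarginal p b = ∑ ω, p ω := by
  rw [Fintype.sum_prod_type, Finset.sum_comm]; rfl

lemma probSet_decode_eq_le (hp : IsPMF p) {M : ℕ} (φ : α → Fin M) (g : Fin M → β → α)
    {c : ℝ} (hc : 0 ≤ c) :
    probSet p {ω | g (φ ω.1) ω.2 = ω.1}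
      ≤ probSet p {ω | sndMarginal p ω.2 * c < p ω} + M * c := by
  classical
  have unlikely : probSet p {ω | g (φ ω.1) ω.2 = ω.1 ∧ p ω ≤ sndMarginal p ω.2 * c} ≤ M * c :=
    calc _ = ∑ ω : α × β, if g (φ ω.1) ω.2 = ω.1 ∧ p ω ≤ sndMarginal p ω.2 * c
          then p ω else 0 := probSet_setOf _ _
      _ ≤ ∑ ω : α × β, if g (φ ω.1) ω.2 = ω.1 then sndMarginal p ω.2 * c else 0 := by
          refine Finset.sum_le_sum fun ω _ => ?_
          split_ifs with h h'
          · exact h.2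
          · exact absurd h.1 h'
          · exact mul_nonneg (sndMarginal_nonneg hp.1 _) hc
          · rfl
      _ = ∑ b, (Finset.univ.filter fun a => g (φ a) b = a).card * (sndMarginal p b * c) := by
          rw [Fintype.sum_prod_type_right]
          simp only [← Finset.sum_filter, Finset.sum_const, nsmul_eq_mul]
      _ ≤ ∑ b, (M : ℝ) * (sndMarginal p b * c) := by
          gcongr with b
          · exact mul_nonneg (sndMarginal_nonneg hp.1 b) hc
          · exact_mod_cast card_filter_decode_eq_le φ g b
      _ = M * c := by
          rw [← Finset.mul_sum, ← Finset.sum_mul, sum_sndMarginal, hp.2, one_mul]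
  calc _ ≤ probSet p ({ω | sndMarginal p ω.2 * c < p ω}
        ∪ {ω | g (φ ω.1) ω.2 = ω.1 ∧ p ω ≤ sndMarginal p ω.2 * c}) := by
        refine probSet_mono hp.1 fun ω hω => ?_
        by_cases h : sndMarginal p ω.2 * c < p ω
        · exact Or.inl h
        · exact Or.inr ⟨hω, not_lt.1 h⟩
    _ ≤ _ := (probSet_union_le hp.1 _ _).trans (add_le_add le_rfl unlikely)

lemma exists_code_error_le [Nonempty α] (hp : IsPMF p) {c : ℝ} (hc : 0 < c) {m : ℕ}
    (hm : 0 < m) :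
    ∃ (φ : α → Fin m) (g : Fin m → β → α),
      probSet p {ω | g (φ ω.1) ω.2 ≠ ω.1}
        ≤ probSet p {ω | p ω < sndMarginal p ω.2 * c} + c⁻¹ / m := by
  classical
  obtain ⟨φ, g, hφg⟩ := exists_binning_error_le hp
    (fun b => Finset.univ.filter fun a => 0 < p (a, b) ∧ sndMarginal p b * c ≤ p (a, b))
    (card_filter_le_inv hp.1 hc) hm
  refine ⟨φ, g, hφg.trans (add_le_add ?_ le_rfl)⟩
  refine probSet_le_of_pos_imp hp.1 fun ω hω hpos => ?_
  simp only [Finset.mem_filter, Finset.mem_univ, true_and, not_and, not_le,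
    Set.mem_ofPred_eq] at hω
  exact hω hpos

end Marginal

section InformationDensity

variable {X Y : Type*} [Fintype X] {P : X × Y → ℝ} {n : ℕ}

/-- The conditional information density `-log₂ P(x | y)`. -/
def condInfoDensity (P : X × Y → ℝ) (ω : X × Y) : ℝ :=
  Real.logb 2 (sndMarginal P ω.2) - Real.logb 2 (P ω)

lemma sndMarginal_mul_rpow_neg_condInfoDensity (hP : ∀ ω, 0 ≤ P ω) {ω : X × Y} (hω : 0 < P ω) :
    sndMarginal P ω.2 * 2 ^ (-condInfoDensity P ω) = P ω := by
  have hq : 0 < sndMarginal P ω.2 := hω.trans_le (le_sndMarginal hP ω)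
  rw [condInfoDensity, neg_sub, Real.rpow_sub two_pos, Real.rpow_logb two_pos (by norm_num) hω,
    Real.rpow_logb two_pos (by norm_num) hq]
  field_simp

variable [Fintype Y]

lemma iidPair_nonneg (hP : ∀ ω, 0 ≤ P ω) (ω : (Fin n → X) × (Fin n → Y)) :
    0 ≤ iidPair P n ω :=
  Finset.prod_nonneg fun _ _ => hP _

lemma iidPair_eq_iidSeq_comp (P : X × Y → ℝ) (n : ℕ) :
    iidPair P n = iidSeq P n ∘ (Equiv.arrowProdEquivProdArrow _ _ _).symm :=
  rfl

lemma isPMF_iidPair (hP : IsPMF P) (n : ℕ) : IsPMF (iidPair P n) := by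
  refine ⟨iidPair_nonneg hP.1, ?_⟩
  rw [iidPair_eq_iidSeq_comp, ← (isPMF_iidSeq hP n).2]
  exact Fintype.sum_equiv _ _ _ fun _ => rfl

def condVarentropy (P : X × Y → ℝ) : ℝ :=
  ∑ ω, P ω * (condInfoDensity P ω - condEntBase P) ^ 2

/-- Pairs of sequences whose empirical conditional entropy is `δ`-far from `H(X|Y)`. -/
def atypicalSet (P : X × Y → ℝ) (n : ℕ) (δ : ℝ) : Set ((Fin n → X) × (Fin n → Y)) :=
  {ω | n * δ < |∑ i, (condInfoDensity P (ω.1 i, ω.2 i) - condEntBase P)|}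

lemma sum_mul_condInfoDensity (P : X × Y → ℝ) :
    ∑ ω, P ω * condInfoDensity P ω = condEntBase P := by
  classical
  have joint : ∀ ω : X × Y, probEq P (fun ω => (ω.1, ω.2)) (ω.1, ω.2) = P ω := fun ω => by
    simp [probEq]
  have side : ∀ ω : X × Y, probEq P Prod.snd ω.2 = sndMarginal P ω.2 := fun ω => by
    simp [probEq, Fintype.sum_prod_type, sndMarginal]
  simp only [condEntBase, condEntOf, entOf, joint, side, condInfoDensity, mul_sub,
    Finset.sum_sub_distrib]
  ring

lemma condEntBase_nonneg (hP : IsPMF P) : 0 ≤ condEntBase P := by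
  rw [← sum_mul_condInfoDensity]
  refine Finset.sum_nonneg fun ω _ => ?_
  rcases (hP.1 ω).eq_or_lt with h | h
  · rw [← h, zero_mul]
  · exact mul_nonneg (hP.1 ω) (sub_nonneg.2 <|
      Real.logb_le_logb_of_le (by norm_num) h (le_sndMarginal hP.1 ω))

lemma sndMarginal_iidPair (y : Fin n → Y) :
    sndMarginal (iidPair P n) y = ∏ i, sndMarginal P (y i) := by
  classical
  exact (Fintype.prod_sum fun i a => P (a, y i)).symm

lemma sndMarginal_mul_rpow_neg_sum_condInfoDensity (hP : ∀ ω, 0 ≤ P ω)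
    {ω : (Fin n → X) × (Fin n → Y)} (hω : 0 < iidPair P n ω) :
    sndMarginal (iidPair P n) ω.2 * 2 ^ (-∑ i, condInfoDensity P (ω.1 i, ω.2 i))
      = iidPair P n ω := by
  have hpos : ∀ i, 0 < P (ω.1 i, ω.2 i) := fun i =>
    (hP _).lt_of_ne (Finset.prod_ne_zero_iff.1 hω.ne' i (Finset.mem_univ i)).symm
  rw [sndMarginal_iidPair, ← Finset.sum_neg_distrib, Real.rpow_sum_of_pos two_pos,
    ← Finset.prod_mul_distrib]
  exact Finset.prod_congr rfl fun i _ => sndMarginal_mul_rpow_neg_condInfoDensity hP (hpos i)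

lemma sum_condInfoDensity_sub (ω : (Fin n → X) × (Fin n → Y)) :
    ∑ i, (condInfoDensity P (ω.1 i, ω.2 i) - condEntBase P)
      = ∑ i, condInfoDensity P (ω.1 i, ω.2 i) - n * condEntBase P := by
  simp [Finset.sum_sub_distrib]

lemma mem_atypicalSet_of_lt (hP : ∀ ω, 0 ≤ P ω) {δ : ℝ} {ω : (Fin n → X) × (Fin n → Y)}
    (hω : 0 < iidPair P n ω)
    (hlt : iidPair P n ω < sndMarginal (iidPair P n) ω.2 * 2 ^ (-(n * (condEntBase P + δ)))) :
    ω ∈ atypicalSet P n δ := by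
  rw [← sndMarginal_mul_rpow_neg_sum_condInfoDensity hP hω] at hlt
  have := (Real.rpow_lt_rpow_left_iff one_lt_two).1
    (lt_of_mul_lt_mul_left hlt (sndMarginal_nonneg (iidPair_nonneg hP) _))
  rw [atypicalSet, Set.mem_ofPred_eq, sum_condInfoDensity_sub]
  exact lt_abs.2 (Or.inl (by linarith))

lemma mem_atypicalSet_of_gt (hP : ∀ ω, 0 ≤ P ω) {δ : ℝ} {ω : (Fin n → X) × (Fin n → Y)}
    (hgt : sndMarginal (iidPair P n) ω.2 * 2 ^ (-(n * (condEntBase P - δ))) < iidPair P n ω) :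
    ω ∈ atypicalSet P n δ := by
  have hq := sndMarginal_nonneg (iidPair_nonneg hP) ω.2
  have hω : 0 < iidPair P n ω := hgt.trans_le' (by positivity)
  rw [← sndMarginal_mul_rpow_neg_sum_condInfoDensity hP hω] at hgt
  have := (Real.rpow_lt_rpow_left_iff one_lt_two).1 (lt_of_mul_lt_mul_left hgt hq)
  rw [atypicalSet, Set.mem_ofPred_eq, sum_condInfoDensity_sub]
  exact lt_abs.2 (Or.inr (by linarith))

end InformationDensity

section Asymptotics

variable {X Y : Type*} [Fintype X] [Fintype Y] {P : X × Y → ℝ} {n : ℕ}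

lemma probSet_atypicalSet_le (hP : IsPMF P) {δ : ℝ} (hδ : 0 < δ) (hn : 0 < n) :
    probSet (iidPair P n) (atypicalSet P n δ) ≤ condVarentropy P / δ ^ 2 / n := by
  have hcentred : ∑ ω, P ω * (condInfoDensity P ω - condEntBase P) = 0 := by
    simp [mul_sub, Finset.sum_sub_distrib, ← Finset.sum_mul, hP.2, sum_mul_condInfoDensity]
  have hn' : (0 : ℝ) < n := Nat.cast_pos.2 hn
  calc probSet (iidPair P n) (atypicalSet P n δ)
      = probSet (iidSeq P n) {z | n * δ < |∑ i, (condInfoDensity P (z i) - condEntBase P)|} :=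
        probSet_comp_equiv (Equiv.arrowProdEquivProdArrow (Fin n) (fun _ => X) (fun _ => Y)).symm
          (iidSeq P n) {z | n * δ < |∑ i, (condInfoDensity P (z i) - condEntBase P)|}
    _ ≤ n * condVarentropy P / (n * δ) ^ 2 :=
        probSet_iidSeq_lt_abs_sum_le hP hcentred (by positivity)
    _ = condVarentropy P / δ ^ 2 / n := by field_simp

lemma tendsto_div_natCast_add_mul_rpow_neg (A C : ℝ) {δ : ℝ} (hδ : 0 < δ) :
    Tendsto (fun n : ℕ => A / n + C * (2 : ℝ) ^ (-(n * δ))) atTop (nhds 0) := by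
  have hgeom : Tendsto (fun n : ℕ => ((2 : ℝ) ^ (-δ)) ^ n) atTop (nhds 0) :=
    tendsto_pow_atTop_nhds_zero_of_lt_one (by positivity)
      (Real.rpow_lt_one_of_one_lt_of_neg one_lt_two (by linarith))
  have hexp : ∀ n : ℕ, ((2 : ℝ) ^ (-δ)) ^ n = (2 : ℝ) ^ (-(n * δ)) := fun n => by
    rw [← Real.rpow_natCast, ← Real.rpow_mul zero_le_two]
    ring_nf
  simpa [hexp] using (tendsto_const_div_atTop_nhds_zero_nat A).add (hgeom.const_mul C)

lemma slAchievable_iff {R ε : ℝ} :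
    slAchievable P R ε ↔ 0 < R ∧ ∃ (M : ℕ → ℕ) (φ : ∀ n : ℕ, (Fin n → X) → Fin (M n))
      (g : ∀ n : ℕ, Fin (M n) → (Fin n → Y) → (Fin n → X)),
      (∀ n, (M n : ℝ) ≤ 2 ^ ((n : ℝ) * R)) ∧
      limsup (fun n => probSet (iidPair P n) {ω | g n (φ n ω.1) ω.2 ≠ ω.1}) atTop ≤ ε := by
  classical
  simp only [slAchievable, probSet_setOf]

end Asymptotics

section Coding

variable {X Y : Type*} [Fintype X] [Fintype Y] {P : X × Y → ℝ}

lemma slAchievable_of_condEntBase_lt (hP : IsPMF P) {R ε : ℝ} (hε : 0 ≤ ε)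
    (hR : condEntBase P < R) : slAchievable P R ε := by
  have : Nonempty X := ⟨hP.nonempty.some.1⟩
  set H := condEntBase P
  set δ := (R - H) / 2 with hδ_def
  have hδ : 0 < δ := half_pos (sub_pos.2 hR)
  have hR0 : 0 < R := (condEntBase_nonneg hP).trans_lt hR
  set M : ℕ → ℕ := fun n => ⌊(2 : ℝ) ^ ((n : ℝ) * R)⌋₊
  have hM_pos : ∀ n, 0 < M n := fun n =>
    Nat.floor_pos.2 (Real.one_le_rpow one_le_two (by positivity))
  have hM_le : ∀ n, (M n : ℝ) ≤ 2 ^ ((n : ℝ) * R) := fun n => Nat.floor_le (by positivity)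
  have hM_ge : ∀ n : ℕ, (2 : ℝ) ^ ((n : ℝ) * R) ≤ 2 * M n := fun n => by
    have h1 : (1 : ℝ) ≤ M n := by exact_mod_cast hM_pos n
    linarith [Nat.lt_floor_add_one ((2 : ℝ) ^ ((n : ℝ) * R))]
  choose φ g hφg using fun n => exists_code_error_le (isPMF_iidPair hP n)
    (c := 2 ^ (-(n * (H + δ)))) (by positivity) (hM_pos n)
  refine slAchievable_iff.2 ⟨hR0, M, φ, g, hM_le, ?_⟩
  have hbound : ∀ n : ℕ, 0 < n → probSet (iidPair P n) {ω | g n (φ n ω.1) ω.2 ≠ ω.1}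
      ≤ condVarentropy P / δ ^ 2 / n + 2 * 2 ^ (-(n * δ)) := by
    intro n hn
    refine (hφg n).trans (add_le_add ?_ ?_)
    · exact (probSet_le_of_pos_imp (isPMF_iidPair hP n).1 fun ω hω hpos =>
        mem_atypicalSet_of_lt hP.1 hpos hω).trans (probSet_atypicalSet_le hP hδ hn)
    · rw [div_le_iff₀ (by exact_mod_cast hM_pos n), ← Real.rpow_neg zero_le_two, neg_neg]
      calc (2 : ℝ) ^ (n * (H + δ)) = 2 ^ (-(n * δ)) * 2 ^ ((n : ℝ) * R) := by
            rw [← Real.rpow_add two_pos]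
            congr 1
            rw [hδ_def]
            ring
        _ ≤ 2 ^ (-(n * δ)) * (2 * M n) := by gcongr; exact hM_ge n
        _ = _ := by ring
  have htend : Tendsto (fun n => probSet (iidPair P n) {ω | g n (φ n ω.1) ω.2 ≠ ω.1}) atTop
      (nhds 0) :=
    squeeze_zero' (Eventually.of_forall fun n => probSet_nonneg (isPMF_iidPair hP n).1 _)
      ((eventually_gt_atTop 0).mono hbound) (tendsto_div_natCast_add_mul_rpow_neg _ 2 hδ)
  rw [htend.limsup_eq]
  exact hε

lemma not_slAchievable_of_lt_condEntBase (hP : IsPMF P) {R ε : ℝ} (hε : ε < 1)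
    (hR : R < condEntBase P) : ¬ slAchievable P R ε := by
  rw [slAchievable_iff]
  rintro ⟨-, M, φ, g, hM, hlim⟩
  set H := condEntBase P
  set δ := (H - R) / 2 with hδ_def
  have hδ : 0 < δ := half_pos (sub_pos.2 hR)
  have hbound : ∀ n : ℕ, 0 < n → 1 - (condVarentropy P / δ ^ 2 / n + 2 ^ (-(n * δ)))
      ≤ probSet (iidPair P n) {ω | g n (φ n ω.1) ω.2 ≠ ω.1} := by
    intro n hn
    have hcorrect := probSet_decode_eq_le (isPMF_iidPair hP n) (φ n) (g n)
      (c := 2 ^ (-(n * (H - δ)))) (by positivity)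
    have hsplit := probSet_add_probSet_compl (isPMF_iidPair hP n)
      {ω | g n (φ n ω.1) ω.2 = ω.1}
    have hatyp : probSet (iidPair P n)
        {ω | sndMarginal (iidPair P n) ω.2 * 2 ^ (-(n * (H - δ))) < iidPair P n ω}
          ≤ condVarentropy P / δ ^ 2 / n :=
      (probSet_mono (isPMF_iidPair hP n).1 fun _ hω => mem_atypicalSet_of_gt hP.1 hω).trans
        (probSet_atypicalSet_le hP hδ hn)
    have hMc : (M n : ℝ) * 2 ^ (-(n * (H - δ))) ≤ 2 ^ (-(n * δ)) :=
      calc (M n : ℝ) * 2 ^ (-(n * (H - δ))) ≤ 2 ^ ((n : ℝ) * R) * 2 ^ (-(n * (H - δ))) := by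
            gcongr; exact hM n
        _ = 2 ^ (-(n * δ)) := by
            rw [← Real.rpow_add two_pos]
            congr 1
            rw [hδ_def]
            ring
    have hcompl : {ω : (Fin n → X) × (Fin n → Y) | g n (φ n ω.1) ω.2 = ω.1}ᶜ
        = {ω | g n (φ n ω.1) ω.2 ≠ ω.1} := rfl
    rw [hcompl] at hsplit
    linarith
  have htend : Tendsto (fun n => probSet (iidPair P n) {ω | g n (φ n ω.1) ω.2 ≠ ω.1}) atTop
      (nhds 1) := by
    refine tendsto_of_tendsto_of_tendsto_of_le_of_le' ?_ tendsto_const_nhds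
      ((eventually_gt_atTop 0).mono hbound)
      (Eventually.of_forall fun n => probSet_le_one (isPMF_iidPair hP n) _)
    simpa using (tendsto_div_natCast_add_mul_rpow_neg _ 1 hδ).const_sub (1 : ℝ)
  rw [htend.limsup_eq] at hlim
  linarith

end Coding

/-- For every `ε ∈ [0,1)`: every rate `R > H(X|Y)` is `ε`-achievable for
lossless source coding with side information, and no rate `R < H(X|Y)` is `ε`-achievable. -/
theorem lossless_side_information_strong_converse
    {X Y : Type*} [Fintype X] [Fintype Y] (P : X × Y → ℝ) (hP : IsPMF P)
    (ε : ℝ) (hε0 : 0 ≤ ε) (hε1 : ε < 1) :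
    (∀ R : ℝ, condEntBase P < R → slAchievable P R ε) ∧
    (∀ R : ℝ, 0 < R → R < condEntBase P → ¬ slAchievable P R ε) :=
  ⟨fun _ hR => slAchievable_of_condEntBase_lt hP hε0 hR,
    fun _ _ hR => not_slAchievable_of_lt_condEntBase hP hε1 hR⟩
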